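/- There exists a constant C > 0 such that for every smooth compactly supported function f : ℝ³ → ℝ and every point x of the closed upper half-space (i.e. x₃ ≥ 0), |f(x)| ≤ C · ‖f‖_{L²}^{1/8} ‖∂₁f‖_{L²}^{1/8} ‖∂₂f‖_{L²}^{1/8} ‖∂₁∂₂f‖_{L²}^{1/8} ‖∂₃f‖_{L²}^{1/8} ‖∂₁∂₃f‖_{L²}^{1/8} ‖∂₂∂₃f‖_{L²}^{1/8} ‖∂₁∂₂∂₃f‖_{L²}^{1/8}. -/

import Mathlib

open MeasureTheory

/-- Partial derivative in the `i`-th coordinate direction. -/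
noncomputable def pd (i : Fin 3) (f : (Fin 3 → ℝ) → ℝ) : (Fin 3 → ℝ) → ℝ :=
  fun x => fderiv ℝ f x (Pi.single i 1)

/-- L² norm over the upper half-space `{x : x₃ > 0}` of ℝ³. -/
noncomputable def L2H (f : (Fin 3 → ℝ) → ℝ) : ℝ :=
  (eLpNorm f 2 (volume.restrict {x : Fin 3 → ℝ | 0 < x 2})).toReal

open Set
open scoped ENNReal NNReal

set_option linter.unnecessarySimpa false


lemma L0real (u : ℝ → ℝ) (hu : ContDiff ℝ 1 u) (hcs : HasCompactSupport u) (t : ℝ) :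
    u t ^ 2 ≤ 2 * ∫ s in Set.Ioi t, |u s| * |deriv u s| := by
  have hcs2 : HasCompactSupport (fun s => u s ^ 2) := by
    apply hcs.comp_left (g := fun y : ℝ => y ^ 2); norm_num
  have key := hcs2.integral_Ioi_deriv_eq (hu.pow 2) t
  have hderiv : (deriv fun s => u s ^ 2) = fun s => 2 * (u s * deriv u s) := by
    funext s
    rw [((hu.differentiable one_ne_zero s).hasDerivAt.fun_pow 2).deriv]; ring
  rw [hderiv] at key
  have hint : IntegrableOn (fun s => 2 * (u s * deriv u s)) (Set.Ioi t) := by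
    apply Integrable.integrableOn
    apply Continuous.integrable_of_hasCompactSupport
    · exact (continuous_const.mul (hu.continuous.mul (hu.continuous_deriv le_rfl)))
    · exact ((hcs.mul_right).comp_left (g := fun y : ℝ => 2 * y) (by norm_num))
  have : u t ^ 2 = ∫ s in Set.Ioi t, -(2 * (u s * deriv u s)) := by
    rw [integral_neg, key]; ring
  rw [this, ← MeasureTheory.integral_const_mul]
  apply integral_mono (hint.neg) _
  · intro s
    simp only [Pi.neg_apply]
    calc -(2*(u s * deriv u s)) ≤ |2*(u s * deriv u s)| := neg_le_abs _
    _ = 2 * (|u s| * |deriv u s|) := by rw [abs_mul, abs_mul]; simp [abs_of_nonneg]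
  · exact (hint.abs.congr (by filter_upwards with s; rw [abs_mul, abs_mul]; simp [abs_of_nonneg]))
lemma pd_contDiff {f : (Fin 3 → ℝ) → ℝ} (hf : ContDiff ℝ (⊤:ℕ∞) f) (i : Fin 3) :
    ContDiff ℝ (⊤:ℕ∞) (pd i f) :=
  (hf.fderiv_right (by simp)).clm_apply contDiff_const

lemma pd_hcs {f : (Fin 3 → ℝ) → ℝ} (hf : HasCompactSupport f) (i : Fin 3) :
    HasCompactSupport (pd i f) :=
  hf.fderiv_apply (𝕜 := ℝ) (Pi.single i 1)

lemma slice_hasDerivAt {f : (Fin 3 → ℝ) → ℝ} (hf : ContDiff ℝ (⊤:ℕ∞) f)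
    (y : Fin 3 → ℝ) (i : Fin 3) (t : ℝ) :
    HasDerivAt (fun t => f (Function.update y i t)) (pd i f (Function.update y i t)) t := by
  have h1 : HasFDerivAt f (fderiv ℝ f (Function.update y i t)) (Function.update y i t) :=
    (hf.differentiable (by simp) (Function.update y i t)).hasFDerivAt
  exact h1.comp_hasDerivAt t (hasDerivAt_update y i t)

lemma slice_contDiff {f : (Fin 3 → ℝ) → ℝ} (hf : ContDiff ℝ (⊤:ℕ∞) f)
    (y : Fin 3 → ℝ) (i : Fin 3) :
    ContDiff ℝ 1 (fun t => f (Function.update y i t)) := by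
  apply (hf.of_le (mod_cast le_top)).comp
  apply contDiff_update

lemma slice_deriv {f : (Fin 3 → ℝ) → ℝ} (hf : ContDiff ℝ (⊤:ℕ∞) f)
    (y : Fin 3 → ℝ) (i : Fin 3) :
    (deriv fun t => f (Function.update y i t)) = fun t => pd i f (Function.update y i t) := by
  funext t; exact (slice_hasDerivAt hf y i t).deriv

lemma slice_hcs {f : (Fin 3 → ℝ) → ℝ} (hf : HasCompactSupport f)
    (y : Fin 3 → ℝ) (i : Fin 3) :
    HasCompactSupport (fun t => f (Function.update y i t)) := by
  obtain ⟨R, hR⟩ := (hf.isBounded.subset_closedBall 0)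
  apply HasCompactSupport.intro (isCompact_Icc (a := -R) (b := R))
  intro t ht
  by_contra h
  have h1 : Function.update y i t ∈ tsupport f := subset_tsupport _ (by simpa using h)
  have h2 := hR h1
  rw [Metric.mem_closedBall, dist_zero_right] at h2
  have h3 : |t| ≤ R := by
    have := norm_le_pi_norm (Function.update y i t) i
    simpa using this.trans h2
  exact ht (abs_le.mp h3 |> fun ⟨h4, h5⟩ => ⟨h4, h5⟩)


-- real 1D lemma proved before (L0), now ennreal version
lemma L0e (u : ℝ → ℝ) (hu : ContDiff ℝ 1 u) (hcs : HasCompactSupport u) (t : ℝ)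
    (hL0 : u t ^ 2 ≤ 2 * ∫ s in Set.Ioi t, |u s| * |deriv u s|) :
    (‖u t‖₊ : ℝ≥0∞) ^ (2:ℝ) ≤ 2 * ∫⁻ s in Set.Ioi t, (‖u s‖₊ * ‖deriv u s‖₊ : ℝ≥0∞) := by
  have hint : IntegrableOn (fun s => |u s| * |deriv u s|) (Set.Ioi t) := by
    apply Integrable.integrableOn
    apply Continuous.integrable_of_hasCompactSupport
    · exact hu.continuous.abs.mul (hu.continuous_deriv le_rfl).abs
    · exact (hcs.abs.mul_right)
  have h1 : (‖u t‖₊ : ℝ≥0∞) ^ (2:ℝ) = ENNReal.ofReal (u t ^ 2) := by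
    rw [← enorm_eq_nnnorm, Real.enorm_eq_ofReal_abs,
      ENNReal.ofReal_rpow_of_nonneg (abs_nonneg _) (by norm_num : (0:ℝ) ≤ 2)]
    congr 1
    rw [show ((2:ℝ)) = ((2:ℕ):ℝ) by norm_num, Real.rpow_natCast, sq_abs]
  rw [h1]
  calc ENNReal.ofReal (u t ^ 2) ≤ ENNReal.ofReal (2 * ∫ s in Set.Ioi t, |u s| * |deriv u s|) :=
        ENNReal.ofReal_le_ofReal hL0
  _ = 2 * ENNReal.ofReal (∫ s in Set.Ioi t, |u s| * |deriv u s|) := by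
        rw [ENNReal.ofReal_mul (by norm_num)]; norm_num
  _ = 2 * ∫⁻ s in Set.Ioi t, ENNReal.ofReal (|u s| * |deriv u s|) := by
        rw [MeasureTheory.ofReal_integral_eq_lintegral_ofReal hint]
        filter_upwards with s
        positivity
  _ = 2 * ∫⁻ s in Set.Ioi t, (‖u s‖₊ * ‖deriv u s‖₊ : ℝ≥0∞) := by
        congr 1
        apply lintegral_congr; intro s
        rw [ENNReal.ofReal_mul (abs_nonneg _), ← enorm_eq_nnnorm, ← enorm_eq_nnnorm,
          Real.enorm_eq_ofReal_abs, Real.enorm_eq_ofReal_abs]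

lemma cs {α : Type*} [MeasurableSpace α] (μ : Measure α) {u v : α → ℝ≥0∞}
    (hu : AEMeasurable u μ) (hv : AEMeasurable v μ) :
    ∫⁻ s, u s * v s ∂μ ≤
      (∫⁻ s, u s ^ (2:ℝ) ∂μ) ^ (1/2:ℝ) * (∫⁻ s, v s ^ (2:ℝ) ∂μ) ^ (1/2:ℝ) := by
  have hpq : Real.HolderConjugate 2 2 := Real.HolderConjugate.two_two
  simpa using ENNReal.lintegral_mul_le_Lp_mul_Lq μ hpq hu hv

lemma rpow_half_sq (x : ℝ≥0∞) : (x ^ (1/2:ℝ)) ^ (2:ℝ) = x := by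
  rw [← ENNReal.rpow_mul]; norm_num

lemma cs_lift {α : Type*} [MeasurableSpace α] (μ : Measure α) {U V : α → ℝ≥0∞}
    (hU : AEMeasurable U μ) (hV : AEMeasurable V μ) :
    ∫⁻ a, (U a) ^ (1/2:ℝ) * (V a) ^ (1/2:ℝ) ∂μ ≤
      (∫⁻ a, U a ∂μ) ^ (1/2:ℝ) * (∫⁻ a, V a ∂μ) ^ (1/2:ℝ) := by
  have h2 := cs μ (hU.pow_const (1/2:ℝ)) (hV.pow_const (1/2:ℝ))
  simp only [rpow_half_sq] at h2
  exact h2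

lemma L0 (u : ℝ → ℝ) (hu : ContDiff ℝ 1 u) (hcs : HasCompactSupport u) (t : ℝ) :
    (‖u t‖₊ : ℝ≥0∞) ^ (2:ℝ) ≤ 2 * ∫⁻ s in Set.Ioi t, (‖u s‖₊ * ‖deriv u s‖₊ : ℝ≥0∞) :=
  L0e u hu hcs t (L0real u hu hcs t)

lemma stepPt {f : (Fin 3 → ℝ) → ℝ} (hf : ContDiff ℝ (⊤:ℕ∞) f) (hcs : HasCompactSupport f)
    (i : Fin 3) (y : Fin 3 → ℝ) :
    (‖f y‖₊ : ℝ≥0∞) ^ (2:ℝ) ≤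
      2 * ∫⁻ t in Set.Ioi (y i),
        (‖f (Function.update y i t)‖₊ * ‖pd i f (Function.update y i t)‖₊ : ℝ≥0∞) := by
  have h := L0 (fun t => f (Function.update y i t)) (slice_contDiff hf y i)
    (slice_hcs hcs y i) (y i)
  rw [Function.update_eq_self] at h
  calc (‖f y‖₊ : ℝ≥0∞) ^ (2:ℝ) ≤ _ := h
  _ = _ := by rw [slice_deriv hf y i]

lemma upd2 (a b c t : ℝ) : Function.update ![a,b,c] 2 t = ![a,b,t] := by
  funext j; fin_cases j <;> simp [Function.update]
lemma upd1 (a b c t : ℝ) : Function.update ![a,b,c] 1 t = ![a,t,c] := by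
  funext j; fin_cases j <;> simp [Function.update]
lemma upd0 (a b c t : ℝ) : Function.update ![a,b,c] 0 t = ![t,b,c] := by
  funext j; fin_cases j <;> simp [Function.update]

noncomputable def Q (g : (Fin 3 → ℝ) → ℝ) (a b c : ℝ) : ℝ≥0∞ := (‖g ![a,b,c]‖₊ : ℝ≥0∞)
noncomputable def T1 (g : (Fin 3 → ℝ) → ℝ) (a b : ℝ) : ℝ≥0∞ :=
  ∫⁻ c in Set.Ioi (0:ℝ), Q g a b c ^ (2:ℝ)
noncomputable def T2 (g : (Fin 3 → ℝ) → ℝ) (a : ℝ) : ℝ≥0∞ :=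
  ∫⁻ c in Set.Ioi (0:ℝ), ∫⁻ b, Q g a b c ^ (2:ℝ)
noncomputable def T3 (g : (Fin 3 → ℝ) → ℝ) : ℝ≥0∞ :=
  ∫⁻ c in Set.Ioi (0:ℝ), ∫⁻ b, ∫⁻ a, Q g a b c ^ (2:ℝ)

lemma contVec : Continuous (fun p : ℝ × ℝ × ℝ => (![p.1, p.2.1, p.2.2] : Fin 3 → ℝ)) := by
  apply continuous_pi; intro j; fin_cases j <;> simp <;> fun_prop

lemma measQ {g : (Fin 3 → ℝ) → ℝ} (hg : Continuous g) :
    Measurable (fun p : ℝ × ℝ × ℝ => Q g p.1 p.2.1 p.2.2 ^ (2:ℝ)) := by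
  apply Measurable.pow_const
  exact (Continuous.measurable (by exact (hg.comp contVec).nnnorm)).coe_nnreal_ennreal

lemma measQ' {g : (Fin 3 → ℝ) → ℝ} (hg : Continuous g) :
    Measurable (fun p : ℝ × ℝ × ℝ => Q g p.1 p.2.1 p.2.2) := by
  exact (Continuous.measurable (by exact (hg.comp contVec).nnnorm)).coe_nnreal_ennreal

section chain
variable {f : (Fin 3 → ℝ) → ℝ}

lemma G1 (hf : ContDiff ℝ (⊤:ℕ∞) f) (hcs : HasCompactSupport f)
    (hg : Continuous f) (hg2 : Continuous (pd 2 f)) (a b c₀ : ℝ) (hc : 0 ≤ c₀) :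
    Q f a b c₀ ^ (2:ℝ) ≤ 2 * (T1 f a b) ^ (1/2:ℝ) * (T1 (pd 2 f) a b) ^ (1/2:ℝ) := by
  have h := stepPt hf hcs 2 ![a,b,c₀]
  simp only [upd2] at h
  have h2 : ((![a,b,c₀] : Fin 3 → ℝ) 2) = c₀ := by simp
  rw [h2] at h
  have h3 : Q f a b c₀ ^ (2:ℝ) ≤ 2 * ∫⁻ t in Set.Ioi (0:ℝ), Q f a b t * Q (pd 2 f) a b t := by
    refine h.trans ?_
    exact mul_le_mul_right (lintegral_mono_set (Set.Ioi_subset_Ioi hc)) 2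
  refine h3.trans ?_
  rw [mul_assoc]
  refine mul_le_mul_right ?_ 2
  exact cs _ ((measQ' hg).comp (by fun_prop : Measurable (fun t : ℝ => ((a, b, t) : ℝ×ℝ×ℝ)))).aemeasurable
    ((measQ' hg2).comp (by fun_prop : Measurable (fun t : ℝ => ((a, b, t) : ℝ×ℝ×ℝ)))).aemeasurable

lemma G2 (hf : ContDiff ℝ (⊤:ℕ∞) f) (hcs : HasCompactSupport f)
    (hg : Continuous f) (hg1 : Continuous (pd 1 f)) (a b : ℝ) :
    T1 f a b ≤ 2 * (T2 f a) ^ (1/2:ℝ) * (T2 (pd 1 f) a) ^ (1/2:ℝ) := by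
  have step : ∀ c : ℝ, Q f a b c ^ (2:ℝ) ≤ 2 * ∫⁻ t, Q f a t c * Q (pd 1 f) a t c := by
    intro c
    have h := stepPt hf hcs 1 ![a,b,c]
    simp only [upd1] at h
    refine h.trans (mul_le_mul_right ?_ 2)
    exact setLIntegral_le_lintegral _ _
  calc T1 f a b ≤ ∫⁻ c in Set.Ioi (0:ℝ), 2 * ∫⁻ t, Q f a t c * Q (pd 1 f) a t c :=
        lintegral_mono fun c => step c
  _ = 2 * ∫⁻ c in Set.Ioi (0:ℝ), ∫⁻ t, Q f a t c * Q (pd 1 f) a t c := lintegral_const_mul' _ _ (by norm_num)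
  _ ≤ 2 * ∫⁻ c in Set.Ioi (0:ℝ),
        (∫⁻ t, Q f a t c ^ (2:ℝ)) ^ (1/2:ℝ) * (∫⁻ t, Q (pd 1 f) a t c ^ (2:ℝ)) ^ (1/2:ℝ) := by
        refine mul_le_mul_right (lintegral_mono fun c => ?_) 2
        exact cs _ ((measQ' hg).comp (by fun_prop : Measurable (fun t : ℝ => ((a, t, c) : ℝ×ℝ×ℝ)))).aemeasurable
          ((measQ' hg1).comp (by fun_prop : Measurable (fun t : ℝ => ((a, t, c) : ℝ×ℝ×ℝ)))).aemeasurable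
  _ ≤ 2 * ((T2 f a) ^ (1/2:ℝ) * (T2 (pd 1 f) a) ^ (1/2:ℝ)) := by
        refine mul_le_mul_right ?_ 2
        refine cs_lift _ ?_ ?_ |>.trans (le_of_eq rfl)
        · exact (Measurable.lintegral_prod_right'
            ((measQ hg).comp (by fun_prop : Measurable (fun p : ℝ × ℝ => ((a, p.2, p.1) : ℝ×ℝ×ℝ))))).aemeasurable
        · exact (Measurable.lintegral_prod_right'
            ((measQ hg1).comp (by fun_prop : Measurable (fun p : ℝ × ℝ => ((a, p.2, p.1) : ℝ×ℝ×ℝ))))).aemeasurable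
  _ = 2 * (T2 f a) ^ (1/2:ℝ) * (T2 (pd 1 f) a) ^ (1/2:ℝ) := by ring

end chain

section chain2
variable {f : (Fin 3 → ℝ) → ℝ}

lemma G3 (hf : ContDiff ℝ (⊤:ℕ∞) f) (hcs : HasCompactSupport f)
    (hg : Continuous f) (hg0 : Continuous (pd 0 f)) (a : ℝ) :
    T2 f a ≤ 2 * (T3 f) ^ (1/2:ℝ) * (T3 (pd 0 f)) ^ (1/2:ℝ) := by
  have step : ∀ b c : ℝ, Q f a b c ^ (2:ℝ) ≤ 2 * ∫⁻ t, Q f t b c * Q (pd 0 f) t b c := by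
    intro b c
    have h := stepPt hf hcs 0 ![a,b,c]
    simp only [upd0] at h
    refine h.trans (mul_le_mul_right ?_ 2)
    exact setLIntegral_le_lintegral _ _
  have minner : ∀ (g : (Fin 3 → ℝ) → ℝ), Continuous g → ∀ c : ℝ,
      AEMeasurable (fun b => ∫⁻ t, Q g t b c ^ (2:ℝ)) volume := by
    intro g hgc c
    exact (Measurable.lintegral_prod_right'
      ((measQ hgc).comp (by fun_prop : Measurable (fun p : ℝ × ℝ => ((p.2, p.1, c) : ℝ×ℝ×ℝ))))).aemeasurable
  have mouter : ∀ (g : (Fin 3 → ℝ) → ℝ), Continuous g →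
      AEMeasurable (fun c => ∫⁻ b, ∫⁻ t, Q g t b c ^ (2:ℝ)) (volume.restrict (Set.Ioi (0:ℝ))) := by
    intro g hgc
    apply Measurable.aemeasurable
    exact Measurable.lintegral_prod_right'
      (f := fun (p : ℝ × ℝ) => ∫⁻ t, Q g t p.2 p.1 ^ (2:ℝ))
      (Measurable.lintegral_prod_right' (f := fun (p : (ℝ × ℝ) × ℝ) => Q g p.2 p.1.2 p.1.1 ^ (2:ℝ))
        ((measQ hgc).comp
          (by fun_prop : Measurable (fun p : (ℝ × ℝ) × ℝ => ((p.2, p.1.2, p.1.1) : ℝ×ℝ×ℝ)))))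
  calc T2 f a ≤ ∫⁻ c in Set.Ioi (0:ℝ), ∫⁻ b, 2 * ∫⁻ t, Q f t b c * Q (pd 0 f) t b c :=
        lintegral_mono fun c => lintegral_mono fun b => step b c
  _ = 2 * ∫⁻ c in Set.Ioi (0:ℝ), ∫⁻ b, ∫⁻ t, Q f t b c * Q (pd 0 f) t b c := by
        simp_rw [← lintegral_const_mul' (2:ℝ≥0∞) _ (by norm_num : (2:ℝ≥0∞) ≠ ⊤)]
  _ ≤ 2 * ∫⁻ c in Set.Ioi (0:ℝ), ∫⁻ b,
        (∫⁻ t, Q f t b c ^ (2:ℝ)) ^ (1/2:ℝ) * (∫⁻ t, Q (pd 0 f) t b c ^ (2:ℝ)) ^ (1/2:ℝ) := by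
        refine mul_le_mul_right (lintegral_mono fun c => lintegral_mono fun b => ?_) 2
        exact cs _ ((measQ' hg).comp (by fun_prop : Measurable (fun t : ℝ => ((t, b, c) : ℝ×ℝ×ℝ)))).aemeasurable
          ((measQ' hg0).comp (by fun_prop : Measurable (fun t : ℝ => ((t, b, c) : ℝ×ℝ×ℝ)))).aemeasurable
  _ ≤ 2 * ∫⁻ c in Set.Ioi (0:ℝ),
        (∫⁻ b, ∫⁻ t, Q f t b c ^ (2:ℝ)) ^ (1/2:ℝ) *
        (∫⁻ b, ∫⁻ t, Q (pd 0 f) t b c ^ (2:ℝ)) ^ (1/2:ℝ) := by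
        refine mul_le_mul_right (lintegral_mono fun c => ?_) 2
        exact cs_lift _ (minner f hg c) (minner (pd 0 f) hg0 c)
  _ ≤ 2 * ((T3 f) ^ (1/2:ℝ) * (T3 (pd 0 f)) ^ (1/2:ℝ)) := by
        refine mul_le_mul_right ?_ 2
        exact cs_lift _ (mouter f hg) (mouter (pd 0 f) hg0)
  _ = 2 * (T3 f) ^ (1/2:ℝ) * (T3 (pd 0 f)) ^ (1/2:ℝ) := by ring

end chain2

lemma insertNth_eq (a b c : ℝ) : (2:Fin 3).insertNth c ![a,b] = ![a,b,c] := by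
  have h0 := Fin.insertNth_apply_succAbove (α := fun _ : Fin 3 => ℝ) (i := (2:Fin 3)) (x := c) (p := ![a,b]) 0
  have h1 := Fin.insertNth_apply_succAbove (α := fun _ : Fin 3 => ℝ) (i := (2:Fin 3)) (x := c) (p := ![a,b]) 1
  have h2 := Fin.insertNth_apply_same (α := fun _ : Fin 3 => ℝ) (i := (2:Fin 3)) (x := c) (p := ![a,b])
  have e0 : (2:Fin 3).succAbove 0 = 0 := by decide
  have e1 : (2:Fin 3).succAbove 1 = 1 := by decide
  rw [e0] at h0; rw [e1] at h1
  funext j; fin_cases j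
  · simpa using h0
  · simpa using h1
  · simpa using h2

lemma tonelli (g : (Fin 3 → ℝ) → ℝ) (hg : Continuous g) :
    T3 g = ∫⁻ x in {x : Fin 3 → ℝ | 0 < x 2}, ((‖g x‖₊ : ℝ≥0∞)) ^ (2:ℝ) := by
  have hF : Measurable (fun x : Fin 3 → ℝ => ((‖g x‖₊ : ℝ≥0∞)) ^ (2:ℝ)) :=
    ((hg.measurable).nnnorm.coe_nnreal_ennreal).pow_const _
  set F := fun x : Fin 3 → ℝ => ((‖g x‖₊ : ℝ≥0∞)) ^ (2:ℝ) with hFdef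
  have hH : MeasurableSet {x : Fin 3 → ℝ | 0 < x 2} :=
    measurableSet_lt measurable_const (measurable_pi_apply 2)
  set φ := MeasurableEquiv.piFinSuccAbove (fun _ : Fin 3 => ℝ) 2 with hφdef
  have hφ : MeasurePreserving φ volume volume := volume_preserving_piFinSuccAbove _ 2
  have hψ : MeasurePreserving (MeasurableEquiv.finTwoArrow (α := ℝ)) volume volume :=
    volume_preserving_finTwoArrow ℝ
  set P : ℝ × (Fin 2 → ℝ) → ℝ≥0∞ := fun p => F (φ.symm p) with hPdef
  have hP : Measurable P := hF.comp φ.symm.measurable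
  have hsymm : ∀ c : ℝ, ∀ y : Fin 2 → ℝ, φ.symm (c, y) = (2:Fin 3).insertNth c y := by
    intro c y; rfl
  -- step 1: swap the two inner integrals
  have swap : ∀ c : ℝ, (∫⁻ b, ∫⁻ a, Q g a b c ^ (2:ℝ)) = ∫⁻ a, ∫⁻ b, Q g a b c ^ (2:ℝ) := by
    intro c
    apply lintegral_lintegral_swap
    exact ((measQ hg).comp
      (by fun_prop : Measurable (fun p : ℝ × ℝ => ((p.2, p.1, c) : ℝ×ℝ×ℝ)))).aemeasurable
  -- step 2: inner double integral as an integral over Fin 2 → ℝ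
  have inner : ∀ c : ℝ, (∫⁻ a, ∫⁻ b, Q g a b c ^ (2:ℝ)) = ∫⁻ y : Fin 2 → ℝ, P (c, y) := by
    intro c
    have hmeas : Measurable (fun p : ℝ × ℝ => P (c, ![p.1, p.2])) := by
      have : (fun p : ℝ × ℝ => P (c, ![p.1, p.2])) = fun p : ℝ × ℝ => Q g p.1 p.2 c ^ (2:ℝ) := by
        funext p; rw [hPdef]; simp only [hsymm, insertNth_eq]; rfl
      rw [this]
      exact (measQ hg).comp (by fun_prop : Measurable (fun p : ℝ × ℝ => ((p.1, p.2, c) : ℝ×ℝ×ℝ)))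
    have hcomp := hψ.lintegral_comp (f := fun p : ℝ × ℝ => P (c, ![p.1, p.2])) hmeas
    rw [Measure.volume_eq_prod, lintegral_prod _ hmeas.aemeasurable] at hcomp
    -- hcomp : ∫⁻ y : Fin 2 → ℝ, P (c, ![(ψ y).1, (ψ y).2]) = ∫⁻ a, ∫⁻ b, P (c, ![a,b])
    have e1 : (∫⁻ a, ∫⁻ b, Q g a b c ^ (2:ℝ)) = ∫⁻ a, ∫⁻ b, P (c, ![a, b]) := by
      apply lintegral_congr; intro a; apply lintegral_congr; intro b
      rw [hPdef]; simp only [hsymm, insertNth_eq]; rfl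
    rw [e1, ← hcomp]
    apply lintegral_congr; intro y
    show P (c, ![(MeasurableEquiv.finTwoArrow y).1, (MeasurableEquiv.finTwoArrow y).2]) = P (c, y)
    have hy : ![(MeasurableEquiv.finTwoArrow y).1, (MeasurableEquiv.finTwoArrow y).2] = y := by
      funext j; fin_cases j <;> rfl
    rw [hy]
  calc T3 g = ∫⁻ c in Set.Ioi (0:ℝ), ∫⁻ y : Fin 2 → ℝ, P (c, y) := by
        unfold T3; apply lintegral_congr; intro c; rw [swap c, inner c]
  _ = ∫⁻ p in (Set.Ioi (0:ℝ)) ×ˢ (univ : Set (Fin 2 → ℝ)), P p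
        ∂((volume : Measure ℝ).prod (volume : Measure (Fin 2 → ℝ))) := by
        rw [← Measure.restrict_prod_eq_prod_univ, lintegral_prod _ hP.aemeasurable]
  _ = ∫⁻ x in φ ⁻¹' ((Set.Ioi (0:ℝ)) ×ˢ (univ : Set (Fin 2 → ℝ))), P (φ x) := by
        rw [← Measure.volume_eq_prod]
        exact (hφ.setLIntegral_comp_preimage ((measurableSet_Ioi).prod MeasurableSet.univ) hP).symm
  _ = ∫⁻ x in {x : Fin 3 → ℝ | 0 < x 2}, F x := by
        have hpre : φ ⁻¹' ((Set.Ioi (0:ℝ)) ×ˢ (univ : Set (Fin 2 → ℝ)))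
            = {x : Fin 3 → ℝ | 0 < x 2} := by
          ext x
          simp [hφdef, MeasurableEquiv.piFinSuccAbove]; rfl
        rw [hpre]
        apply lintegral_congr; intro x
        exact congrArg F (φ.symm_apply_apply x)

lemma half_mul_half (X : ℝ≥0∞) : X ^ (1/2:ℝ) * X ^ (1/2:ℝ) = X := by
  rw [← ENNReal.rpow_add_of_nonneg _ _ (by norm_num) (by norm_num)]
  norm_num

lemma sq_expand (X Y : ℝ≥0∞) :
    (2 * X ^ (1/2:ℝ) * Y ^ (1/2:ℝ)) * (2 * X ^ (1/2:ℝ) * Y ^ (1/2:ℝ)) = 4 * (X * Y) := by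
  have hX := half_mul_half X
  have hY := half_mul_half Y
  calc (2 * X ^ (1/2:ℝ) * Y ^ (1/2:ℝ)) * (2 * X ^ (1/2:ℝ) * Y ^ (1/2:ℝ))
      = (2*2) * ((X ^ (1/2:ℝ) * X ^ (1/2:ℝ)) * (Y ^ (1/2:ℝ) * Y ^ (1/2:ℝ))) := by ring
  _ = 4 * (X * Y) := by rw [hX, hY]; norm_num

lemma pow16 (N : ℝ≥0∞) (M : ℝ≥0∞) (hM : M = N ^ (2:ℝ)) :
    ((M*M)*(M*M))*((M*M)*(M*M)) = N ^ (16:ℝ) := by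
  have h8 : ((M*M)*(M*M))*((M*M)*(M*M)) = M ^ (8:ℕ) := by ring
  rw [h8, hM, ← ENNReal.rpow_natCast (N ^ (2:ℝ)) 8, ← ENNReal.rpow_mul]
  norm_num

lemma combine {f : (Fin 3 → ℝ) → ℝ} (hf : ContDiff ℝ (⊤:ℕ∞) f) (hcs : HasCompactSupport f)
    (x : Fin 3 → ℝ) (hx : 0 ≤ x 2) :
    (‖f x‖₊ : ℝ≥0∞) ^ (16:ℝ) ≤ (2:ℝ≥0∞) ^ (24:ℕ) *
      (((T3 f * T3 (pd 0 f)) * (T3 (pd 1 f) * T3 (pd 0 (pd 1 f)))) *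
       ((T3 (pd 2 f) * T3 (pd 0 (pd 2 f))) *
        (T3 (pd 1 (pd 2 f)) * T3 (pd 0 (pd 1 (pd 2 f)))))) := by
  -- smoothness and support package
  have h1 := pd_contDiff hf 1
  have h2 := pd_contDiff hf 2
  have h12 := pd_contDiff h2 1
  have c1 := pd_hcs hcs 1
  have c2 := pd_hcs hcs 2
  have c12 := pd_hcs c2 1
  have cont : ∀ {g : (Fin 3 → ℝ) → ℝ}, ContDiff ℝ (⊤:ℕ∞) g → Continuous g :=
    fun hg => hg.continuous
  set a := x 0; set b := x 1; set c := x 2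
  have hxeq : ![a, b, c] = x := by funext j; fin_cases j <;> rfl
  set M : ℝ≥0∞ := Q f a b c ^ (2:ℝ) with hMdef
  -- level 1
  have g1 : M ≤ 2 * (T1 f a b) ^ (1/2:ℝ) * (T1 (pd 2 f) a b) ^ (1/2:ℝ) :=
    G1 hf hcs (cont hf) (cont h2) a b c hx
  -- level 2
  have g2A : T1 f a b ≤ 2 * (T2 f a) ^ (1/2:ℝ) * (T2 (pd 1 f) a) ^ (1/2:ℝ) :=
    G2 hf hcs (cont hf) (cont h1) a b
  have g2B : T1 (pd 2 f) a b ≤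
      2 * (T2 (pd 2 f) a) ^ (1/2:ℝ) * (T2 (pd 1 (pd 2 f)) a) ^ (1/2:ℝ) :=
    G2 h2 c2 (cont h2) (cont h12) a b
  -- level 3
  have g3 : ∀ (g : (Fin 3 → ℝ) → ℝ), ContDiff ℝ (⊤:ℕ∞) g → HasCompactSupport g →
      T2 g a ≤ 2 * (T3 g) ^ (1/2:ℝ) * (T3 (pd 0 g)) ^ (1/2:ℝ) :=
    fun g hg hcg => G3 hg hcg (cont hg) (cont (pd_contDiff hg 0)) a
  have g3A := g3 f hf hcs
  have g3B := g3 (pd 1 f) h1 c1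
  have g3C := g3 (pd 2 f) h2 c2
  have g3D := g3 (pd 1 (pd 2 f)) h12 c12
  -- squaring cascade
  have s1 : M * M ≤ 4 * (T1 f a b * T1 (pd 2 f) a b) :=
    (mul_le_mul' g1 g1).trans_eq (sq_expand _ _)
  have s2 : (M*M) * (M*M) ≤ (2:ℝ≥0∞)^(8:ℕ) * ((T2 f a * T2 (pd 1 f) a) *
      (T2 (pd 2 f) a * T2 (pd 1 (pd 2 f)) a)) := by
    have t1 : T1 f a b * T1 (pd 2 f) a b ≤
        (2 * (T2 f a) ^ (1/2:ℝ) * (T2 (pd 1 f) a) ^ (1/2:ℝ)) *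
        (2 * (T2 (pd 2 f) a) ^ (1/2:ℝ) * (T2 (pd 1 (pd 2 f)) a) ^ (1/2:ℝ)) :=
      mul_le_mul' g2A g2B
    calc (M*M) * (M*M) ≤ (4 * (T1 f a b * T1 (pd 2 f) a b)) * (4 * (T1 f a b * T1 (pd 2 f) a b)) :=
          mul_le_mul' s1 s1
    _ ≤ (4 * ((2 * (T2 f a) ^ (1/2:ℝ) * (T2 (pd 1 f) a) ^ (1/2:ℝ)) *
          (2 * (T2 (pd 2 f) a) ^ (1/2:ℝ) * (T2 (pd 1 (pd 2 f)) a) ^ (1/2:ℝ)))) *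
        (4 * ((2 * (T2 f a) ^ (1/2:ℝ) * (T2 (pd 1 f) a) ^ (1/2:ℝ)) *
          (2 * (T2 (pd 2 f) a) ^ (1/2:ℝ) * (T2 (pd 1 (pd 2 f)) a) ^ (1/2:ℝ)))) := by
          exact mul_le_mul' (mul_le_mul_right t1 4) (mul_le_mul_right t1 4)
    _ = (4*4) * (((2 * (T2 f a) ^ (1/2:ℝ) * (T2 (pd 1 f) a) ^ (1/2:ℝ)) *
          (2 * (T2 f a) ^ (1/2:ℝ) * (T2 (pd 1 f) a) ^ (1/2:ℝ))) *
          ((2 * (T2 (pd 2 f) a) ^ (1/2:ℝ) * (T2 (pd 1 (pd 2 f)) a) ^ (1/2:ℝ)) *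
          (2 * (T2 (pd 2 f) a) ^ (1/2:ℝ) * (T2 (pd 1 (pd 2 f)) a) ^ (1/2:ℝ)))) := by ring
    _ = (4*4) * ((4 * (T2 f a * T2 (pd 1 f) a)) *
          (4 * (T2 (pd 2 f) a * T2 (pd 1 (pd 2 f)) a))) := by rw [sq_expand, sq_expand]
    _ = (2:ℝ≥0∞)^(8:ℕ) * ((T2 f a * T2 (pd 1 f) a) *
          (T2 (pd 2 f) a * T2 (pd 1 (pd 2 f)) a)) := by ring
  -- substitute level-3 bounds, then square once more
  have s3 : (M*M) * (M*M) ≤ (2:ℝ≥0∞)^(8:ℕ) *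
      (((2 * (T3 f) ^ (1/2:ℝ) * (T3 (pd 0 f)) ^ (1/2:ℝ)) *
        (2 * (T3 (pd 1 f)) ^ (1/2:ℝ) * (T3 (pd 0 (pd 1 f))) ^ (1/2:ℝ))) *
       ((2 * (T3 (pd 2 f)) ^ (1/2:ℝ) * (T3 (pd 0 (pd 2 f))) ^ (1/2:ℝ)) *
        (2 * (T3 (pd 1 (pd 2 f))) ^ (1/2:ℝ) * (T3 (pd 0 (pd 1 (pd 2 f)))) ^ (1/2:ℝ)))) := by
    refine s2.trans (mul_le_mul_right ?_ _)
    exact mul_le_mul' (mul_le_mul' g3A g3B) (mul_le_mul' g3C g3D)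
  calc (‖f x‖₊ : ℝ≥0∞) ^ (16:ℝ) = ((M*M)*(M*M))*((M*M)*(M*M)) := by
        rw [pow16 (‖f x‖₊ : ℝ≥0∞) M (by rw [hMdef]; unfold Q; rw [hxeq])]
  _ ≤ ((2:ℝ≥0∞)^(8:ℕ) *
      (((2 * (T3 f) ^ (1/2:ℝ) * (T3 (pd 0 f)) ^ (1/2:ℝ)) *
        (2 * (T3 (pd 1 f)) ^ (1/2:ℝ) * (T3 (pd 0 (pd 1 f))) ^ (1/2:ℝ))) *
       ((2 * (T3 (pd 2 f)) ^ (1/2:ℝ) * (T3 (pd 0 (pd 2 f))) ^ (1/2:ℝ)) *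
        (2 * (T3 (pd 1 (pd 2 f))) ^ (1/2:ℝ) * (T3 (pd 0 (pd 1 (pd 2 f)))) ^ (1/2:ℝ))))) *
      ((2:ℝ≥0∞)^(8:ℕ) *
      (((2 * (T3 f) ^ (1/2:ℝ) * (T3 (pd 0 f)) ^ (1/2:ℝ)) *
        (2 * (T3 (pd 1 f)) ^ (1/2:ℝ) * (T3 (pd 0 (pd 1 f))) ^ (1/2:ℝ))) *
       ((2 * (T3 (pd 2 f)) ^ (1/2:ℝ) * (T3 (pd 0 (pd 2 f))) ^ (1/2:ℝ)) *
        (2 * (T3 (pd 1 (pd 2 f))) ^ (1/2:ℝ) * (T3 (pd 0 (pd 1 (pd 2 f)))) ^ (1/2:ℝ))))) :=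
      mul_le_mul' s3 s3
  _ = (2:ℝ≥0∞)^(16:ℕ) *
      ((((2 * (T3 f) ^ (1/2:ℝ) * (T3 (pd 0 f)) ^ (1/2:ℝ)) *
         (2 * (T3 f) ^ (1/2:ℝ) * (T3 (pd 0 f)) ^ (1/2:ℝ))) *
        ((2 * (T3 (pd 1 f)) ^ (1/2:ℝ) * (T3 (pd 0 (pd 1 f))) ^ (1/2:ℝ)) *
         (2 * (T3 (pd 1 f)) ^ (1/2:ℝ) * (T3 (pd 0 (pd 1 f))) ^ (1/2:ℝ)))) *
       (((2 * (T3 (pd 2 f)) ^ (1/2:ℝ) * (T3 (pd 0 (pd 2 f))) ^ (1/2:ℝ)) *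
         (2 * (T3 (pd 2 f)) ^ (1/2:ℝ) * (T3 (pd 0 (pd 2 f))) ^ (1/2:ℝ))) *
        ((2 * (T3 (pd 1 (pd 2 f))) ^ (1/2:ℝ) * (T3 (pd 0 (pd 1 (pd 2 f)))) ^ (1/2:ℝ)) *
         (2 * (T3 (pd 1 (pd 2 f))) ^ (1/2:ℝ) * (T3 (pd 0 (pd 1 (pd 2 f)))) ^ (1/2:ℝ))))) := by
      ring
  _ = (2:ℝ≥0∞)^(16:ℕ) *
      (((4 * (T3 f * T3 (pd 0 f))) * (4 * (T3 (pd 1 f) * T3 (pd 0 (pd 1 f))))) *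
       ((4 * (T3 (pd 2 f) * T3 (pd 0 (pd 2 f)))) *
        (4 * (T3 (pd 1 (pd 2 f)) * T3 (pd 0 (pd 1 (pd 2 f))))))) := by
      rw [sq_expand, sq_expand, sq_expand, sq_expand]
  _ = (2:ℝ≥0∞) ^ (24:ℕ) *
      (((T3 f * T3 (pd 0 f)) * (T3 (pd 1 f) * T3 (pd 0 (pd 1 f)))) *
       ((T3 (pd 2 f) * T3 (pd 0 (pd 2 f))) *
        (T3 (pd 1 (pd 2 f)) * T3 (pd 0 (pd 1 (pd 2 f)))))) := by ring

lemma T3_eLp (g : (Fin 3 → ℝ) → ℝ) (hg : Continuous g) :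
    T3 g = (eLpNorm g 2 (volume.restrict {x : Fin 3 → ℝ | 0 < x 2})) ^ (2:ℝ) := by
  rw [tonelli g hg, eLpNorm_eq_lintegral_rpow_enorm_toReal (by norm_num) (by norm_num)]
  rw [show ((2:ℝ≥0∞)).toReal = (2:ℝ) by norm_num]
  rw [rpow_half_sq]
  rfl

theorem stmt0 :
    ∃ C > (0 : ℝ), ∀ f : (Fin 3 → ℝ) → ℝ,
      ContDiff ℝ (⊤ : ℕ∞) f → HasCompactSupport f →
      ∀ x : Fin 3 → ℝ, 0 ≤ x 2 →
      |f x| ≤ C * L2H f ^ (1/8 : ℝ) * L2H (pd 0 f) ^ (1/8 : ℝ) *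
        L2H (pd 1 f) ^ (1/8 : ℝ) * L2H (pd 0 (pd 1 f)) ^ (1/8 : ℝ) *
        L2H (pd 2 f) ^ (1/8 : ℝ) * L2H (pd 0 (pd 2 f)) ^ (1/8 : ℝ) *
        L2H (pd 1 (pd 2 f)) ^ (1/8 : ℝ) * L2H (pd 0 (pd 1 (pd 2 f))) ^ (1/8 : ℝ) := by
  refine ⟨(2:ℝ) ^ (3/2:ℝ), Real.rpow_pos_of_pos two_pos _, ?_⟩
  intro f hf hcs x hx
  set μH := volume.restrict {x : Fin 3 → ℝ | 0 < x 2} with hμH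
  -- the eight functions
  have h0 := pd_contDiff hf 0
  have h1 := pd_contDiff hf 1
  have h2 := pd_contDiff hf 2
  have h01 := pd_contDiff h1 0
  have h02 := pd_contDiff h2 0
  have h12 := pd_contDiff h2 1
  have h012 := pd_contDiff h12 0
  have c0 := pd_hcs hcs 0
  have c1 := pd_hcs hcs 1
  have c2 := pd_hcs hcs 2
  have c01 := pd_hcs c1 0
  have c02 := pd_hcs c2 0
  have c12 := pd_hcs c2 1
  have c012 := pd_hcs c12 0
  have fin : ∀ (g : (Fin 3 → ℝ) → ℝ), ContDiff ℝ (⊤:ℕ∞) g → HasCompactSupport g →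
      eLpNorm g 2 μH ≠ ⊤ := fun g hg hcg =>
    ((hg.continuous.memLp_of_hasCompactSupport hcg).restrict _).eLpNorm_lt_top.ne
  -- main estimate in ℝ≥0∞
  have key := combine hf hcs x hx
  rw [T3_eLp f hf.continuous, T3_eLp _ h0.continuous, T3_eLp _ h1.continuous,
    T3_eLp _ h01.continuous, T3_eLp _ h2.continuous, T3_eLp _ h02.continuous,
    T3_eLp _ h12.continuous, T3_eLp _ h012.continuous] at key
  -- take 1/16-th power
  have key16 := ENNReal.rpow_le_rpow key (by norm_num : (0:ℝ) ≤ 1/16)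
  have lhs16 : (((‖f x‖₊ : ℝ≥0∞)) ^ (16:ℝ)) ^ (1/16:ℝ) = ((‖f x‖₊ : ℝ≥0∞)) := by
    rw [← ENNReal.rpow_mul]; norm_num
  rw [lhs16] at key16
  -- distribute the power on the right
  have dist : (((2:ℝ≥0∞) ^ (24:ℕ) *
      ((((eLpNorm f 2 μH) ^ (2:ℝ) * (eLpNorm (pd 0 f) 2 μH) ^ (2:ℝ)) *
        ((eLpNorm (pd 1 f) 2 μH) ^ (2:ℝ) * (eLpNorm (pd 0 (pd 1 f)) 2 μH) ^ (2:ℝ))) *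
       (((eLpNorm (pd 2 f) 2 μH) ^ (2:ℝ) * (eLpNorm (pd 0 (pd 2 f)) 2 μH) ^ (2:ℝ)) *
        ((eLpNorm (pd 1 (pd 2 f)) 2 μH) ^ (2:ℝ) *
         (eLpNorm (pd 0 (pd 1 (pd 2 f))) 2 μH) ^ (2:ℝ)))))) ^ (1/16:ℝ)
      = (2:ℝ≥0∞) ^ (3/2:ℝ) *
      ((((eLpNorm f 2 μH) ^ (1/8:ℝ) * (eLpNorm (pd 0 f) 2 μH) ^ (1/8:ℝ)) *
        ((eLpNorm (pd 1 f) 2 μH) ^ (1/8:ℝ) * (eLpNorm (pd 0 (pd 1 f)) 2 μH) ^ (1/8:ℝ))) *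
       (((eLpNorm (pd 2 f) 2 μH) ^ (1/8:ℝ) * (eLpNorm (pd 0 (pd 2 f)) 2 μH) ^ (1/8:ℝ)) *
        ((eLpNorm (pd 1 (pd 2 f)) 2 μH) ^ (1/8:ℝ) *
         (eLpNorm (pd 0 (pd 1 (pd 2 f))) 2 μH) ^ (1/8:ℝ)))) := by
    simp only [ENNReal.mul_rpow_of_nonneg _ _ (by norm_num : (0:ℝ) ≤ 1/16),
      ← ENNReal.rpow_mul, ← ENNReal.rpow_natCast]
    norm_num
  rw [dist] at key16
  -- pass to real numbers
  have hfin : (2:ℝ≥0∞) ^ (3/2:ℝ) *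
      ((((eLpNorm f 2 μH) ^ (1/8:ℝ) * (eLpNorm (pd 0 f) 2 μH) ^ (1/8:ℝ)) *
        ((eLpNorm (pd 1 f) 2 μH) ^ (1/8:ℝ) * (eLpNorm (pd 0 (pd 1 f)) 2 μH) ^ (1/8:ℝ))) *
       (((eLpNorm (pd 2 f) 2 μH) ^ (1/8:ℝ) * (eLpNorm (pd 0 (pd 2 f)) 2 μH) ^ (1/8:ℝ)) *
        ((eLpNorm (pd 1 (pd 2 f)) 2 μH) ^ (1/8:ℝ) *
         (eLpNorm (pd 0 (pd 1 (pd 2 f))) 2 μH) ^ (1/8:ℝ)))) ≠ ⊤ := by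
    apply ENNReal.mul_ne_top (ENNReal.rpow_ne_top_of_nonneg (by norm_num) (by norm_num))
    refine ENNReal.mul_ne_top (ENNReal.mul_ne_top (ENNReal.mul_ne_top ?_ ?_) (ENNReal.mul_ne_top ?_ ?_))
      (ENNReal.mul_ne_top (ENNReal.mul_ne_top ?_ ?_) (ENNReal.mul_ne_top ?_ ?_)) <;>
      exact ENNReal.rpow_ne_top_of_nonneg (by norm_num) (fin _ (by assumption) (by assumption))
  have hre := ENNReal.toReal_mono hfin key16
  rw [ENNReal.coe_toReal, coe_nnnorm, Real.norm_eq_abs] at hre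
  refine hre.trans (le_of_eq ?_)
  simp only [ENNReal.toReal_mul, ← ENNReal.toReal_rpow]
  rw [show ((2:ℝ≥0∞)).toReal = (2:ℝ) by norm_num]
  show _ = (2:ℝ) ^ (3/2:ℝ) * L2H f ^ (1/8 : ℝ) * L2H (pd 0 f) ^ (1/8 : ℝ) *
        L2H (pd 1 f) ^ (1/8 : ℝ) * L2H (pd 0 (pd 1 f)) ^ (1/8 : ℝ) *
        L2H (pd 2 f) ^ (1/8 : ℝ) * L2H (pd 0 (pd 2 f)) ^ (1/8 : ℝ) *
        L2H (pd 1 (pd 2 f)) ^ (1/8 : ℝ) * L2H (pd 0 (pd 1 (pd 2 f))) ^ (1/8 : ℝ)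
  unfold L2H
  ring
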